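/- arXiv:2408.05255 — 5 statements merged into one kernel-verified Lean document; each statement's English description precedes it below -/
import Mathlib

section
/- Let 0 < H ≤ 1/2 and R(s,t) = (1/2)(s^{2H} + t^{2H} - |s-t|^{2H}). Fix 0 ≤ s < t. The function u ↦ R([s,t]×[0,u]) = R(t,u) - R(s,u) is decreasing on [0,s], increasing on [s,t], and decreasing on [t,∞). -/
/-- Key concavity inequality: for `0 < α ≤ 1`, increments of `x ↦ x ^ α` shrink. -/
lemma fbm_key {α : ℝ} (hα0 : 0 < α) (hα1 : α ≤ 1) {x y c : ℝ} (hx : 0 ≤ x)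
    (hxy : x ≤ y) (hc : 0 ≤ c) :
    (y + c) ^ α - y ^ α ≤ (x + c) ^ α - x ^ α := by
  have hy : 0 ≤ y := hx.trans hxy
  have hconc : ConcaveOn ℝ (Set.Ici 0) (fun z : ℝ => z ^ α) :=
    Real.concaveOn_rpow hα0.le hα1
  rcases eq_or_lt_of_le (le_trans hxy (le_add_of_nonneg_right hc)) with heq | hlt
  · have hc0 : c = 0 := by nlinarith
    have hxy' : x = y := by nlinarith
    subst hc0; subst hxy'; simp
  · set d : ℝ := y + c - x with hd
    have hdpos : 0 < d := by simp [hd]; linarith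
    set θ : ℝ := c / d with hθ
    have hθ0 : 0 ≤ θ := div_nonneg hc hdpos.le
    have hθ1 : θ ≤ 1 := (div_le_one hdpos).2 (by simp [hd]; linarith)
    have hxm : x ∈ Set.Ici (0:ℝ) := hx
    have hym : y + c ∈ Set.Ici (0:ℝ) := by simp; linarith
    have e1 : θ * x + (1 - θ) * (y + c) = y := by
      rw [hθ]
      field_simp [hdpos.ne']
      rw [hd]
      ring
    have e2 : (1 - θ) * x + θ * (y + c) = x + c := by
      rw [hθ]
      field_simp [hdpos.ne']
      rw [hd]
      ring
    have h1 := hconc.2 hxm hym hθ0 (by linarith) (by ring : θ + (1 - θ) = 1)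
    have h2 := hconc.2 hxm hym (by linarith : (0:ℝ) ≤ 1 - θ) hθ0
      (by ring : (1 - θ) + θ = 1)
    simp only [smul_eq_mul] at h1 h2
    rw [e1] at h1
    rw [e2] at h2
    nlinarith [h1, h2]

/-- Covariance function of fractional Brownian motion with Hurst parameter `H`. -/
noncomputable def fbmCov (H s t : ℝ) : ℝ :=
  (1/2) * (s ^ (2*H) + t ^ (2*H) - |s - t| ^ (2*H))

/-- For `0 < H ≤ 1/2` and `0 ≤ s < t`, the function `u ↦ R(t,u) - R(s,u)`
(i.e. `u ↦ R([s,t]×[0,u])`) is decreasing on `[0,s]`, increasing on `[s,t]`,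
and decreasing on `[t,∞)`. -/
theorem fbmCov_incr_monotonicity (H s t : ℝ) (hH0 : 0 < H) (hH : H ≤ 1/2)
    (hs : 0 ≤ s) (hst : s < t) :
    AntitoneOn (fun u => fbmCov H t u - fbmCov H s u) (Set.Icc 0 s) ∧
    MonotoneOn (fun u => fbmCov H t u - fbmCov H s u) (Set.Icc s t) ∧
    AntitoneOn (fun u => fbmCov H t u - fbmCov H s u) (Set.Ici t) := by
  set α : ℝ := 2 * H with hα
  have hα0 : 0 < α := by positivity
  have hα1 : α ≤ 1 := by rw [hα]; linarith
  have eL : ∀ u : ℝ, u ≤ s → fbmCov H t u - fbmCov H s u =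
      (1/2) * (t ^ α - s ^ α) + (1/2) * ((s - u) ^ α - (t - u) ^ α) := by
    intro u hu
    have h1 : (0:ℝ) ≤ s - u := by linarith
    have h2 : (0:ℝ) ≤ t - u := by linarith
    simp only [fbmCov, abs_of_nonneg h1, abs_of_nonneg h2, ← hα]
    ring
  have eM : ∀ u : ℝ, s ≤ u → u ≤ t → fbmCov H t u - fbmCov H s u =
      (1/2) * (t ^ α - s ^ α) + (1/2) * ((u - s) ^ α - (t - u) ^ α) := by
    intro u hu1 hu2
    have h1 : s - u ≤ 0 := by linarith
    have h2 : (0:ℝ) ≤ t - u := by linarith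
    simp only [fbmCov, abs_of_nonpos h1, abs_of_nonneg h2, neg_sub, ← hα]
    ring
  have eR : ∀ u : ℝ, t ≤ u → fbmCov H t u - fbmCov H s u =
      (1/2) * (t ^ α - s ^ α) + (1/2) * ((u - s) ^ α - (u - t) ^ α) := by
    intro u hu
    have h1 : s - u ≤ 0 := by linarith
    have h2 : t - u ≤ 0 := by linarith
    simp only [fbmCov, abs_of_nonpos h1, abs_of_nonpos h2, neg_sub, ← hα]
    ring
  refine ⟨?_, ?_, ?_⟩
  · intro u1 hu1 u2 hu2 h12
    simp only [Set.mem_Icc] at hu1 hu2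
    dsimp only
    rw [eL u1 hu1.2, eL u2 hu2.2]
    have key := fbm_key hα0 hα1 (x := s - u2) (y := s - u1) (c := t - s)
      (by linarith [hu2.2]) (by linarith) (by linarith)
    have e1 : s - u1 + (t - s) = t - u1 := by ring
    have e2 : s - u2 + (t - s) = t - u2 := by ring
    rw [e1, e2] at key
    linarith
  · intro u1 hu1 u2 hu2 h12
    simp only [Set.mem_Icc] at hu1 hu2
    dsimp only
    rw [eM u1 hu1.1 hu1.2, eM u2 hu2.1 hu2.2]
    have k1 : (u1 - s) ^ α ≤ (u2 - s) ^ α :=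
      Real.rpow_le_rpow (by linarith [hu1.1]) (by linarith) hα0.le
    have k2 : (t - u2) ^ α ≤ (t - u1) ^ α :=
      Real.rpow_le_rpow (by linarith [hu2.2]) (by linarith) hα0.le
    linarith
  · intro u1 hu1 u2 hu2 h12
    simp only [Set.mem_Ici] at hu1 hu2
    dsimp only
    rw [eR u1 hu1, eR u2 hu2]
    have key := fbm_key hα0 hα1 (x := u1 - t) (y := u2 - t) (c := t - s)
      (by linarith) (by linarith) (by linarith)
    have e1 : u2 - t + (t - s) = u2 - s := by ring
    have e2 : u1 - t + (t - s) = u1 - s := by ring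
    rw [e1, e2] at key
    linarith
end

section
/- Let 0 < H ≤ 1/2 and R(s,t) = (1/2)(s^{2H} + t^{2H} - |s-t|^{2H}). For all u < s < t < v with 0 ≤ u, the rectangular increment satisfies R([s,t]×[u,v]) > 0. -/
/-- Rectangular increment `R([s,s']×[t,t']) = R(s',t') - R(s,t') - R(s',t) + R(s,t)`. -/
def rectIncr (R : ℝ → ℝ → ℝ) (s s' t t' : ℝ) : ℝ :=
  R s' t' - R s t' - R s' t + R s t

/-! The variance terms `s ^ (2*H)` cancel in a rectangular increment of `fbmCov H`, leaving
half an alternating sum of the powers `|x - y| ^ (2*H)` over the corners. For disjoint ordered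
intervals `u < s < t < v` this is `(v - s)^(2H) - (v - t)^(2H) + (t - u)^(2H) - (s - u)^(2H)`,
positive because `x ↦ x ^ (2*H)` is strictly increasing on `[0, ∞)` for every `H > 0`. -/

theorem rectIncr_fbmCov (H s s' t t' : ℝ) :
    rectIncr (fbmCov H) s s' t t' =
      (|s - t'| ^ (2*H) - |s' - t'| ^ (2*H) + |s' - t| ^ (2*H) - |s - t| ^ (2*H)) / 2 := by
  simp only [rectIncr, fbmCov]
  ring

theorem fbmCov_rectIncr_pos_general (H u s t v : ℝ) (hH0 : 0 < H)
    (hus : u < s) (hst : s < t) (htv : t < v) :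
    0 < rectIncr (fbmCov H) s t u v := by
  have hpow : 0 < 2 * H := by linarith
  rw [rectIncr_fbmCov, abs_sub_comm s v, abs_sub_comm t v, abs_of_pos (sub_pos.2 (hst.trans htv)),
    abs_of_pos (sub_pos.2 htv), abs_of_pos (sub_pos.2 (hus.trans hst)), abs_of_pos (sub_pos.2 hus)]
  have hleft : (v - t) ^ (2*H) < (v - s) ^ (2*H) :=
    Real.rpow_lt_rpow (sub_nonneg.2 htv.le) (by linarith) hpow
  have hright : (s - u) ^ (2*H) < (t - u) ^ (2*H) :=
    Real.rpow_lt_rpow (sub_nonneg.2 hus.le) (by linarith) hpow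
  linarith

/-- For `0 < H ≤ 1/2` and `0 ≤ u < s < t < v`, the rectangular increment
`R([s,t]×[u,v])` of the fBm covariance is strictly positive. -/
theorem fbmCov_rectIncr_pos (H u s t v : ℝ) (hH0 : 0 < H) (hH : H ≤ 1/2)
    (hu : 0 ≤ u) (hus : u < s) (hst : s < t) (htv : t < v) :
    0 < rectIncr (fbmCov H) s t u v :=
  fbmCov_rectIncr_pos_general H u s t v hH0 hus hst htv
end

section
/- Let 0 < H ≤ 1/2 and R(s,t) = (1/2)(s^{2H} + t^{2H} - |s-t|^{2H}). For fixed 0 ≤ s < t, the total variation of the function u ↦ R(t,u) - R(s,u) on [0,∞) is at most 3(t-s)^{2H}, and its supremum norm on [0,∞) is at most 3(t-s)^{2H}. -/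
open Set

lemma ConcaveOn.add_le_add_of_le {s : Set ℝ} {f : ℝ → ℝ} (hf : ConcaveOn ℝ s f) {a b c : ℝ}
    (ha : a ∈ s) (hbc : b + c ∈ s) (hab : a ≤ b) (hc : 0 ≤ c) :
    f (b + c) + f a ≤ f b + f (a + c) := by
  rcases (show a ≤ b + c by linarith).eq_or_lt with h | h
  · obtain rfl : c = 0 := by linarith
    obtain rfl : b = a := by linarith
    simp
  -- `a + c` and `b` are the two convex combinations of `a` and `b + c` with swapped weights.
  set d := b + c - a
  have hd : 0 < d := by linarith
  have hw : (b - a) / d + c / d = 1 := by field_simp; ring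
  have h₁ := hf.2 ha hbc (div_nonneg (sub_nonneg.2 hab) hd.le) (div_nonneg hc hd.le) hw
  have h₂ := hf.2 ha hbc (div_nonneg hc hd.le) (div_nonneg (sub_nonneg.2 hab) hd.le)
    ((add_comm _ _).trans hw)
  have e₁ : (b - a) / d * a + c / d * (b + c) = a + c := by field_simp; ring
  have e₂ : c / d * a + (b - a) / d * (b + c) = b := by field_simp; ring
  simp only [smul_eq_mul, e₁, e₂] at h₁ h₂
  linear_combination h₁ + h₂ - (f a + f (b + c)) * hw

lemma Fin.sum_succ_sub_castSucc {M : Type*} [AddCommGroup M] {n : ℕ} (f : Fin (n + 1) → M) :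
    ∑ i : Fin n, (f i.succ - f i.castSucc) = f (Fin.last n) - f 0 := by
  cases n with
  | zero => simp
  | succ m =>
    rw [← Fin.succ_last, ← Fin.sum_Iic_sub (Fin.last m) f]
    exact Finset.sum_congr (by ext; simp [Fin.le_last]) fun _ _ => rfl

lemma sum_abs_sub_le_of_eqOn_sub {α : Type*} [Preorder α] {S : Set α} {f p q : α → ℝ}
    (hp : MonotoneOn p S) (hq : MonotoneOn q S) (hf : EqOn f (p - q) S)
    {n : ℕ} {u : Fin (n + 1) → α} (hu : Monotone u) (huS : ∀ i, u i ∈ S) :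
    ∑ i : Fin n, |f (u i.succ) - f (u i.castSucc)| ≤
      (p (u (Fin.last n)) - p (u 0)) + (q (u (Fin.last n)) - q (u 0)) := by
  rw [← Fin.sum_succ_sub_castSucc (fun i => p (u i)),
    ← Fin.sum_succ_sub_castSucc (fun i => q (u i)), ← Finset.sum_add_distrib]
  refine Finset.sum_le_sum fun i _ => ?_
  have hle := hu (Fin.castSucc_le_succ i)
  have hpi := hp (huS _) (huS _) hle
  have hqi := hq (huS _) (huS _) hle
  rw [hf (huS _), hf (huS _), abs_le]
  simp only [Pi.sub_apply]
  constructor <;> linarith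

lemma sum_abs_sub_le_of_antitoneOn_monotoneOn_antitoneOn {f : ℝ → ℝ} {a s t m : ℝ}
    (has : a ≤ s) (hst : s ≤ t) (h₁ : AntitoneOn f (Icc a s)) (h₂ : MonotoneOn f (Icc s t))
    (h₃ : AntitoneOn f (Ici t)) (hm : ∀ x, t ≤ x → m ≤ f x)
    {n : ℕ} {u : Fin (n + 1) → ℝ} (hu : Monotone u) (hua : ∀ i, a ≤ u i) :
    ∑ i : Fin n, |f (u i.succ) - f (u i.castSucc)| ≤ (f a - f s) + (f t - f s) + (f t - m) := by
  -- `f` is the increasing clamped part minus the two increasing functions `-f (min x s)`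
  -- and `-f (max x t)`, up to constants.
  set p : ℝ → ℝ := fun x => f (max s (min x t)) - f s - f t
  set q : ℝ → ℝ := fun x => -f (min x s) - f (max x t)
  have hmid : ∀ x, max s (min x t) ∈ Icc s t :=
    fun x => ⟨le_max_left _ _, max_le hst (min_le_right _ _)⟩
  have hleft : ∀ x, a ≤ x → min x s ∈ Icc a s := fun x hx => ⟨le_min hx has, min_le_right _ _⟩
  have hright : ∀ x, max x t ∈ Ici t := fun x => mem_Ici.2 (le_max_right _ _)
  have hp : MonotoneOn p (Ici a) := fun x _ y _ hxy => by
    have := h₂ (hmid x) (hmid y) (max_le_max le_rfl (min_le_min hxy le_rfl))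
    simp only [p]; linarith
  have hq : MonotoneOn q (Ici a) := fun x hx y hy hxy => by
    have := h₁ (hleft x hx) (hleft y hy) (min_le_min hxy le_rfl)
    have := h₃ (hright x) (hright y) (max_le_max hxy le_rfl)
    simp only [q]; linarith
  have hf : EqOn f (p - q) (Ici a) := fun x _ => by
    simp only [Pi.sub_apply, p, q]
    rcases le_total x s with hxs | hsx
    · rw [min_eq_left (hxs.trans hst), max_eq_left hxs, min_eq_left hxs,
        max_eq_right (hxs.trans hst)]; ring
    rcases le_total x t with hxt | htx
    · rw [min_eq_left hxt, max_eq_right hsx, min_eq_right hsx, max_eq_right hxt]; ring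
    · rw [min_eq_right htx, max_eq_right hst, min_eq_right hsx, max_eq_left htx]; ring
  refine (sum_abs_sub_le_of_eqOn_sub hp hq hf hu hua).trans ?_
  set x₀ := u 0
  set x₁ := u (Fin.last n)
  have := h₂ (hmid x₁) ⟨hst, le_rfl⟩ (hmid x₁).2
  have := h₂ ⟨le_rfl, hst⟩ (hmid x₀) (hmid x₀).1
  have := h₁ ⟨le_rfl, has⟩ (hleft x₀ (hua 0)) (hleft x₀ (hua 0)).1
  have := h₁ (hleft x₁ (hua _)) ⟨has, le_rfl⟩ (hleft x₁ (hua _)).2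
  have := h₃ (le_refl t) (hright x₀) (hright x₀)
  have := hm _ (hright x₁)
  simp only [p, q]
  linarith

section FbmCov

variable {H s t : ℝ}

lemma fbmCov_sub_fbmCov (H s t u : ℝ) :
    fbmCov H t u - fbmCov H s u =
      (t ^ (2 * H) - s ^ (2 * H) + |s - u| ^ (2 * H) - |t - u| ^ (2 * H)) / 2 := by
  unfold fbmCov; ring

lemma fbmCov_sub_fbmCov_zero (hs : 0 ≤ s) (ht : 0 ≤ t) :
    fbmCov H t 0 - fbmCov H s 0 = 0 := by
  rw [fbmCov_sub_fbmCov, sub_zero, sub_zero, abs_of_nonneg hs, abs_of_nonneg ht]; ring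

lemma fbmCov_sub_fbmCov_left (hH : 0 < H) (hst : s ≤ t) :
    fbmCov H t s - fbmCov H s s = (t ^ (2 * H) - s ^ (2 * H) - (t - s) ^ (2 * H)) / 2 := by
  rw [fbmCov_sub_fbmCov, sub_self, abs_zero, Real.zero_rpow (by positivity),
    abs_of_nonneg (sub_nonneg.2 hst)]; ring

lemma fbmCov_sub_fbmCov_right (hH : 0 < H) (hst : s ≤ t) :
    fbmCov H t t - fbmCov H s t = (t ^ (2 * H) - s ^ (2 * H) + (t - s) ^ (2 * H)) / 2 := by
  rw [fbmCov_sub_fbmCov, sub_self, abs_zero, Real.zero_rpow (by positivity),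
    abs_of_nonpos (sub_nonpos.2 hst), neg_sub]; ring

lemma fbmCov_sub_fbmCov_antitoneOn_Iic (hH₀ : 0 ≤ H) (hH : H ≤ 1 / 2) (hst : s ≤ t) :
    AntitoneOn (fun u => fbmCov H t u - fbmCov H s u) (Iic s) := fun x hx y hy hxy => by
  rw [mem_Iic] at hx hy
  have := (Real.concaveOn_rpow (p := 2 * H) (by linarith) (by linarith)).add_le_add_of_le
    (mem_Ici.2 (sub_nonneg.2 hy)) (mem_Ici.2 (by linarith : 0 ≤ s - x + (t - s)))
    (by linarith : s - y ≤ s - x) (sub_nonneg.2 hst)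
  rw [show s - x + (t - s) = t - x by ring, show s - y + (t - s) = t - y by ring] at this
  simp only [fbmCov_sub_fbmCov, abs_of_nonneg (sub_nonneg.2 (hx.trans hst)),
    abs_of_nonneg (sub_nonneg.2 (hy.trans hst)), abs_of_nonneg (sub_nonneg.2 hx),
    abs_of_nonneg (sub_nonneg.2 hy)]
  linarith

lemma fbmCov_sub_fbmCov_monotoneOn_Icc (hH₀ : 0 ≤ H) :
    MonotoneOn (fun u => fbmCov H t u - fbmCov H s u) (Icc s t) := fun x hx y hy hxy => by
  have hα : 0 ≤ 2 * H := by positivity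
  have := Real.rpow_le_rpow (sub_nonneg.2 hx.1) (sub_le_sub_right hxy s) hα
  have := Real.rpow_le_rpow (sub_nonneg.2 hy.2) (sub_le_sub_left hxy t) hα
  simp only [fbmCov_sub_fbmCov, abs_of_nonpos (sub_nonpos.2 hx.1),
    abs_of_nonpos (sub_nonpos.2 hy.1), abs_of_nonneg (sub_nonneg.2 hx.2),
    abs_of_nonneg (sub_nonneg.2 hy.2), neg_sub]
  linarith

lemma fbmCov_sub_fbmCov_antitoneOn_Ici (hH₀ : 0 ≤ H) (hH : H ≤ 1 / 2) (hst : s ≤ t) :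
    AntitoneOn (fun u => fbmCov H t u - fbmCov H s u) (Ici t) := fun x hx y hy hxy => by
  rw [mem_Ici] at hx hy
  have := (Real.concaveOn_rpow (p := 2 * H) (by linarith) (by linarith)).add_le_add_of_le
    (mem_Ici.2 (sub_nonneg.2 hx)) (mem_Ici.2 (by linarith : 0 ≤ y - t + (t - s)))
    (by linarith : x - t ≤ y - t) (sub_nonneg.2 hst)
  rw [show y - t + (t - s) = y - s by ring, show x - t + (t - s) = x - s by ring] at this
  simp only [fbmCov_sub_fbmCov, abs_of_nonpos (sub_nonpos.2 (hst.trans hx)),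
    abs_of_nonpos (sub_nonpos.2 (hst.trans hy)), abs_of_nonpos (sub_nonpos.2 hx),
    abs_of_nonpos (sub_nonpos.2 hy), neg_sub]
  linarith

lemma le_fbmCov_sub_fbmCov_of_le (hH₀ : 0 ≤ H) (hst : s ≤ t) {u : ℝ} (hu : t ≤ u) :
    (t ^ (2 * H) - s ^ (2 * H)) / 2 ≤ fbmCov H t u - fbmCov H s u := by
  have := Real.rpow_le_rpow (sub_nonneg.2 hu) (sub_le_sub_left hst u) (by positivity : 0 ≤ 2 * H)
  rw [fbmCov_sub_fbmCov, abs_of_nonpos (sub_nonpos.2 (hst.trans hu)),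
    abs_of_nonpos (sub_nonpos.2 hu), neg_sub, neg_sub]
  linarith

lemma fbmCov_sub_fbmCov_variation_le (hH₀ : 0 < H) (hH : H ≤ 1 / 2) (hs : 0 ≤ s) (hst : s ≤ t)
    {n : ℕ} {u : Fin (n + 1) → ℝ} (hu : Monotone u) (hu₀ : ∀ i, 0 ≤ u i) :
    ∑ i : Fin n, |(fbmCov H t (u i.succ) - fbmCov H s (u i.succ)) -
      (fbmCov H t (u i.castSucc) - fbmCov H s (u i.castSucc))| ≤ 3 * (t - s) ^ (2 * H) := by
  refine (sum_abs_sub_le_of_antitoneOn_monotoneOn_antitoneOn hs hst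
    ((fbmCov_sub_fbmCov_antitoneOn_Iic hH₀.le hH hst).mono Icc_subset_Iic_self)
    (fbmCov_sub_fbmCov_monotoneOn_Icc hH₀.le) (fbmCov_sub_fbmCov_antitoneOn_Ici hH₀.le hH hst)
    (fun _ => le_fbmCov_sub_fbmCov_of_le hH₀.le hst) hu hu₀).trans ?_
  rw [fbmCov_sub_fbmCov_zero hs (hs.trans hst), fbmCov_sub_fbmCov_left hH₀ hst,
    fbmCov_sub_fbmCov_right hH₀ hst]
  have := Real.rpow_le_rpow hs hst (by positivity : 0 ≤ 2 * H)
  have := Real.rpow_nonneg (sub_nonneg.2 hst) (2 * H)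
  linarith

end FbmCov

/-- For `0 < H ≤ 1/2` and `0 ≤ s < t`, the total variation of
`g : u ↦ R(t,u) - R(s,u)` on `[0,∞)` is at most `3(t-s)^{2H}` (i.e. every
partition sum of increments is bounded by `3(t-s)^{2H}`), and its supremum
norm on `[0,∞)` is at most `3(t-s)^{2H}`. -/
theorem fbmCov_incr_variation_bound (H s t : ℝ) (hH0 : 0 < H) (hH : H ≤ 1/2)
    (hs : 0 ≤ s) (hst : s < t) :
    (∀ (n : ℕ) (u : Fin (n+1) → ℝ), Monotone u → (∀ i, 0 ≤ u i) →
      ∑ i : Fin n,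
        |(fbmCov H t (u i.succ) - fbmCov H s (u i.succ)) -
          (fbmCov H t (u i.castSucc) - fbmCov H s (u i.castSucc))|
        ≤ 3 * (t - s) ^ (2*H)) ∧
    (∀ u : ℝ, 0 ≤ u → |fbmCov H t u - fbmCov H s u| ≤ 3 * (t - s) ^ (2*H)) := by
  refine ⟨fun n u hu hu₀ => fbmCov_sub_fbmCov_variation_le hH0 hH hs hst.le hu hu₀,
    fun u hu => ?_⟩
  simpa [fbmCov_sub_fbmCov_zero hs (hs.trans hst.le)] using
    fbmCov_sub_fbmCov_variation_le hH0 hH hs hst.le (u := ![0, u])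
      (Fin.monotone_iff_le_succ.2 (by simpa using hu)) (by simp [Fin.forall_fin_two, hu])
end

section
/- Let p, q be positive integers, and let X_1,...,X_p, Y_1,...,Y_q be jointly Gaussian centered random variables forming elements x_i, y_j of the first Wiener chaos. Let f = x_1 ⊙ ... ⊙ x_p and g = y_1 ⊙ ... ⊙ y_q be symmetric tensor products in H^{⊙p}, H^{⊙q}, where H is the underlying Hilbert space. Then for the symmetrized r-th contraction, r! · C(p,r) · C(q,r) · (f ⊗̃_r g) = ∑_{I ⊆ {1,...,p}, |I|=r} ∑_{J ⊆ {1,...,q}, |J|=r} ∑_{σ ∈ S_r} ∏_{k=1}^r ⟨x_{i_k}, y_{j_{σ(k)}}⟩_H · ( ⊙_{i ∉ I} x_i ⊙ ⊙_{j ∉ J} y_j ), where I = {i_1 < ... < i_r}, J = {j_1 < ... < j_r}. -/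
/-!
Write `σ ∈ S_p` as the `r`-set `I = σ({1,…,r})` together with orderings `ρ` of `I` and `ω` of
`Iᶜ`, and likewise `τ ∈ S_q` as `(J, π, ω')`. Since a symmetric tensor does not see the order of
its factors, the `(σ, τ)`-summand depends only on `I`, `J` and the matching `π ρ⁻¹` of `I` with
`J`. Summing out `ω`, `ω'` and `ρ` produces the factor `(p - r)! (q - r)! r!`, and
`r! C(p,r) C(q,r) · r! (p - r)! (q - r)! = p! q!`.
-/

open scoped TensorProduct InnerProductSpace
open PiTensorProduct

/-- The symmetric tensor `⊙ᵢ vᵢ`, realized inside the `n`-fold tensor power as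
the symmetrization `(1/n!) ∑_{σ ∈ S_n} v_{σ(1)} ⊗ ⋯ ⊗ v_{σ(n)}`. -/
noncomputable def symTensor {H : Type*} [NormedAddCommGroup H]
    [InnerProductSpace ℝ H] {n : ℕ} (v : Fin n → H) :
    ⨂[ℝ] _ : Fin n, H :=
  ((n.factorial : ℝ)⁻¹) •
    ∑ σ : Equiv.Perm (Fin n), tprod ℝ (fun i => v (σ i))

open Finset Equiv
open scoped Nat

section SymTensor

variable {H : Type*} [NormedAddCommGroup H] [InnerProductSpace ℝ H]

theorem symTensor_comp_perm {n : ℕ} (v : Fin n → H) (e : Perm (Fin n)) :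
    symTensor (v ∘ e) = symTensor v := by
  unfold symTensor
  congr 1
  exact Fintype.sum_equiv (Equiv.mulLeft e) _ _ fun _ => rfl

theorem Fin.append_comp_perm_comp_perm {α : Type*} {m n : ℕ} (u : Fin m → α) (v : Fin n → α)
    (ω : Perm (Fin m)) (ω' : Perm (Fin n)) :
    Fin.append (u ∘ ω) (v ∘ ω') = Fin.append u v ∘ finSumFinEquiv.permCongr (ω.sumCongr ω') := by
  funext i
  refine Fin.addCases (fun i => ?_) (fun i => ?_) i <;> simp [permCongr_apply]

theorem symTensor_append_comp_perm {m n : ℕ} (u : Fin m → H) (v : Fin n → H)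
    (ω : Perm (Fin m)) (ω' : Perm (Fin n)) :
    symTensor (Fin.append (u ∘ ω) (v ∘ ω')) = symTensor (Fin.append u v) := by
  rw [Fin.append_comp_perm_comp_perm, symTensor_comp_perm]

end SymTensor

section PermSplit

variable {p r : ℕ}

def finSumFinSubEquiv (h : r ≤ p) : Fin r ⊕ Fin (p - r) ≃ Fin p :=
  finSumFinEquiv.trans (finCongr (Nat.add_sub_cancel' h))

theorem Finset.card_compl_fin {I : Finset (Fin p)} (hI : #I = r) : #Iᶜ = p - r := by
  rw [card_compl, Fintype.card_fin, hI]

/-- Sends slot `k < r` to the `ρ k`-th element of `I` and slot `r + i` to the `ω i`-th element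
of `Iᶜ`. -/
noncomputable def permOfSplit (h : r ≤ p) (I : Finset (Fin p)) (hI : #I = r)
    (ρ : Perm (Fin r)) (ω : Perm (Fin (p - r))) : Perm (Fin p) :=
  (finSumFinSubEquiv h).symm.trans
    ((ρ.sumCongr ω).trans (finSumEquivOfFinset hI (card_compl_fin hI)))

theorem permOfSplit_apply_inl (h : r ≤ p) (I : Finset (Fin p)) (hI : #I = r) (ρ : Perm (Fin r))
    (ω : Perm (Fin (p - r))) (k : Fin r) :
    permOfSplit h I hI ρ ω (finSumFinSubEquiv h (.inl k)) = I.orderEmbOfFin hI (ρ k) := by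
  simp [permOfSplit]

theorem permOfSplit_apply_inr (h : r ≤ p) (I : Finset (Fin p)) (hI : #I = r) (ρ : Perm (Fin r))
    (ω : Perm (Fin (p - r))) (i : Fin (p - r)) :
    permOfSplit h I hI ρ ω (finSumFinSubEquiv h (.inr i)) =
      Iᶜ.orderEmbOfFin (card_compl_fin hI) (ω i) := by
  simp [permOfSplit]

theorem permOfSplit_injective (h : r ≤ p) :
    Function.Injective fun a : {I // I ∈ powersetCard r (univ : Finset (Fin p))} ×
        Perm (Fin r) × Perm (Fin (p - r)) =>
      permOfSplit h a.1.1 (mem_powersetCard.mp a.1.2).2 a.2.1 a.2.2 := by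
  rintro ⟨⟨I, hI⟩, ρ, ω⟩ ⟨⟨I', hI'⟩, ρ', ω'⟩ heq
  replace hI := (mem_powersetCard.mp hI).2
  replace hI' := (mem_powersetCard.mp hI').2
  replace heq : permOfSplit h I hI ρ ω = permOfSplit h I' hI' ρ' ω' := heq
  have hlt (k : Fin r) : I.orderEmbOfFin hI (ρ k) = I'.orderEmbOfFin hI' (ρ' k) := by
    rw [← permOfSplit_apply_inl h, ← permOfSplit_apply_inl h, heq]
  have hadd (i : Fin (p - r)) : Iᶜ.orderEmbOfFin (card_compl_fin hI) (ω i) =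
      I'ᶜ.orderEmbOfFin (card_compl_fin hI') (ω' i) := by
    rw [← permOfSplit_apply_inr h I hI, ← permOfSplit_apply_inr h I' hI', heq]
  obtain rfl : I = I' := by
    rw [← coe_inj, ← range_orderEmbOfFin I hI, ← range_orderEmbOfFin I' hI',
      ← EquivLike.range_comp (I.orderEmbOfFin hI) ρ,
      ← EquivLike.range_comp (I'.orderEmbOfFin hI') ρ']
    exact congrArg Set.range (funext hlt)
  obtain rfl : ρ = ρ' := Equiv.ext fun k => (I.orderEmbOfFin hI).injective (hlt k)
  obtain rfl : ω = ω' := Equiv.ext fun i => (Iᶜ.orderEmbOfFin _).injective (hadd i)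
  rfl

/-- The inverse of the splitting reads off `I` as the image of the first `r` slots. -/
theorem sum_perm_eq_sum_permOfSplit {M : Type*} [AddCommMonoid M] (h : r ≤ p)
    (f : Perm (Fin p) → M) :
    ∑ σ, f σ = ∑ I ∈ (powersetCard r (univ : Finset (Fin p))).attach, ∑ ρ, ∑ ω,
      f (permOfSplit h I.1 (mem_powersetCard.mp I.2).2 ρ ω) := by
  have hsplit : Function.Bijective _ :=
    (Fintype.bijective_iff_injective_and_card _).mpr ⟨permOfSplit_injective h, by
      simp only [Fintype.card_prod, Fintype.card_coe, card_powersetCard, card_univ,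
        Fintype.card_fin, Fintype.card_perm, ← mul_assoc,
        Nat.choose_mul_factorial_mul_factorial h]⟩
  rw [← Fintype.sum_bijective _ hsplit _ f fun _ => rfl, Fintype.sum_prod_type, univ_eq_attach]
  exact sum_congr rfl fun I _ => Fintype.sum_prod_type _

end PermSplit

section Contraction

variable {H : Type*} [NormedAddCommGroup H] [InnerProductSpace ℝ H] {p q r : ℕ}

noncomputable def contractionTerm (hrp : r ≤ p) (hrq : r ≤ q) (x : Fin p → H) (y : Fin q → H)
    (σ : Perm (Fin p)) (τ : Perm (Fin q)) : ⨂[ℝ] _ : Fin (p - r + (q - r)), H :=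
  (∏ k : Fin r,
      ⟪x (σ (finSumFinSubEquiv hrp (.inl k))), y (τ (finSumFinSubEquiv hrq (.inl k)))⟫_ℝ) •
    symTensor (Fin.append (fun i => x (σ (finSumFinSubEquiv hrp (.inr i))))
      (fun i => y (τ (finSumFinSubEquiv hrq (.inr i)))))

noncomputable def matchingTerm (x : Fin p → H) (y : Fin q → H) {I : Finset (Fin p)} (hI : #I = r)
    {J : Finset (Fin q)} (hJ : #J = r) (π : Perm (Fin r)) : ⨂[ℝ] _ : Fin (p - r + (q - r)), H :=
  (∏ k : Fin r, ⟪x (I.orderEmbOfFin hI k), y (J.orderEmbOfFin hJ (π k))⟫_ℝ) •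
    symTensor (Fin.append (x ∘ Iᶜ.orderEmbOfFin (card_compl_fin hI))
      (y ∘ Jᶜ.orderEmbOfFin (card_compl_fin hJ)))

theorem contractionTerm_permOfSplit (hrp : r ≤ p) (hrq : r ≤ q) (x : Fin p → H) (y : Fin q → H)
    {I : Finset (Fin p)} (hI : #I = r) {J : Finset (Fin q)} (hJ : #J = r)
    (ρ π : Perm (Fin r)) (ω : Perm (Fin (p - r))) (ω' : Perm (Fin (q - r))) :
    contractionTerm hrp hrq x y (permOfSplit hrp I hI ρ ω) (permOfSplit hrq J hJ π ω') =
      matchingTerm x y hI hJ (π * ρ⁻¹) := by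
  unfold contractionTerm matchingTerm
  simp only [permOfSplit_apply_inl, permOfSplit_apply_inr]
  rw [← Equiv.prod_comp ρ fun k =>
    ⟪x (I.orderEmbOfFin hI k), y (J.orderEmbOfFin hJ ((π * ρ⁻¹) k))⟫_ℝ]
  simp only [Perm.mul_apply, Perm.coe_inv, symm_apply_apply]
  rw [← symTensor_append_comp_perm (x ∘ Iᶜ.orderEmbOfFin (card_compl_fin hI))
    (y ∘ Jᶜ.orderEmbOfFin (card_compl_fin hJ)) ω ω']
  rfl

theorem sum_contractionTerm_permOfSplit (hrp : r ≤ p) (hrq : r ≤ q) (x : Fin p → H)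
    (y : Fin q → H) {I : Finset (Fin p)} (hI : #I = r) (ρ : Perm (Fin r))
    (ω : Perm (Fin (p - r))) :
    ∑ τ, contractionTerm hrp hrq x y (permOfSplit hrp I hI ρ ω) τ =
      ((q - r)! : ℝ) • ∑ J ∈ (powersetCard r (univ : Finset (Fin q))).attach, ∑ π,
        matchingTerm x y hI (mem_powersetCard.mp J.2).2 π := by
  rw [sum_perm_eq_sum_permOfSplit hrq, Finset.smul_sum]
  refine sum_congr rfl fun J _ => ?_
  simp only [contractionTerm_permOfSplit, sum_const, card_univ, Fintype.card_perm,
    Fintype.card_fin, ← Nat.cast_smul_eq_nsmul ℝ]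
  rw [← Finset.smul_sum]
  exact congrArg _ (Fintype.sum_equiv (Equiv.mulRight ρ⁻¹) _ _ fun _ => rfl)

theorem sum_sum_contractionTerm (hrp : r ≤ p) (hrq : r ≤ q) (x : Fin p → H) (y : Fin q → H) :
    ∑ σ, ∑ τ, contractionTerm hrp hrq x y σ τ =
      ((r ! * (p - r)! * (q - r)! : ℕ) : ℝ) •
        ∑ I ∈ (powersetCard r (univ : Finset (Fin p))).attach,
          ∑ J ∈ (powersetCard r (univ : Finset (Fin q))).attach, ∑ π,
            matchingTerm x y (mem_powersetCard.mp I.2).2 (mem_powersetCard.mp J.2).2 π := by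
  rw [sum_perm_eq_sum_permOfSplit hrp, Finset.smul_sum]
  refine sum_congr rfl fun I _ => ?_
  simp only [sum_contractionTerm_permOfSplit, sum_const, card_univ, Fintype.card_perm,
    Fintype.card_fin, ← Nat.cast_smul_eq_nsmul ℝ, smul_smul]
  push_cast
  ring_nf

end Contraction

theorem factorial_mul_choose_mul_choose_mul {p q r : ℕ} (hrp : r ≤ p) (hrq : r ≤ q) :
    r ! * p.choose r * q.choose r * (r ! * (p - r)! * (q - r)!) = p ! * q ! := by
  rw [← Nat.choose_mul_factorial_mul_factorial hrp, ← Nat.choose_mul_factorial_mul_factorial hrq]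
  ring

/-- The left-hand side is `r!·C(p,r)·C(q,r)·(f ⊗̃_r g)` for `f = x₁ ⊙ ⋯ ⊙ x_p`,
`g = y₁ ⊙ ⋯ ⊙ y_q`, with the contraction of the two symmetrizations expanded as
`(1/p!q!) ∑_{σ,τ} ∏_{k≤r} ⟨x_{σ(k)}, y_{τ(k)}⟩ ·
  x_{σ(r+1)} ⊙ ⋯ ⊙ x_{σ(p)} ⊙ y_{τ(r+1)} ⊙ ⋯ ⊙ y_{τ(q)}`. -/
theorem symmetrized_contraction_formula {H : Type*} [NormedAddCommGroup H]
    [InnerProductSpace ℝ H] (p q r : ℕ) (hrp : r ≤ p) (hrq : r ≤ q)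
    (x : Fin p → H) (y : Fin q → H) :
    ((r.factorial * p.choose r * q.choose r : ℕ) : ℝ) •
      (((p.factorial * q.factorial : ℕ) : ℝ)⁻¹ •
        ∑ σ : Equiv.Perm (Fin p), ∑ τ : Equiv.Perm (Fin q),
          (∏ k : Fin r,
            ⟪x (σ ⟨k.1, lt_of_lt_of_le k.2 hrp⟩),
              y (τ ⟨k.1, lt_of_lt_of_le k.2 hrq⟩)⟫_ℝ) •
          symTensor (Fin.append
            (fun i : Fin (p - r) => x (σ ⟨r + i.1, by have := i.2; omega⟩))
            (fun i : Fin (q - r) => y (τ ⟨r + i.1, by have := i.2; omega⟩))))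
    =
    ∑ I ∈ (Finset.powersetCard r (Finset.univ : Finset (Fin p))).attach,
      ∑ J ∈ (Finset.powersetCard r (Finset.univ : Finset (Fin q))).attach,
        ∑ σ : Equiv.Perm (Fin r),
          (∏ k : Fin r,
            ⟪x (I.1.orderEmbOfFin ((Finset.mem_powersetCard.mp I.2).2) k),
              y (J.1.orderEmbOfFin ((Finset.mem_powersetCard.mp J.2).2) (σ k))⟫_ℝ) •
          symTensor (Fin.append
            (fun i : Fin (p - r) => x ((I.1ᶜ).orderEmbOfFin
              (by simp [Finset.card_compl, (Finset.mem_powersetCard.mp I.2).2]) i))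
            (fun i : Fin (q - r) => y ((J.1ᶜ).orderEmbOfFin
              (by simp [Finset.card_compl, (Finset.mem_powersetCard.mp J.2).2]) i))) := by
  have hcoef : ((r.factorial * p.choose r * q.choose r : ℕ) : ℝ) *
      ((p.factorial * q.factorial : ℕ) : ℝ)⁻¹ *
        ((r.factorial * (p - r).factorial * (q - r).factorial : ℕ) : ℝ) = 1 := by
    rw [mul_right_comm, ← Nat.cast_mul, factorial_mul_choose_mul_choose_mul hrp hrq,
      mul_inv_cancel₀ (by positivity)]
  calc _ = ((r.factorial * p.choose r * q.choose r : ℕ) : ℝ) •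
        (((p.factorial * q.factorial : ℕ) : ℝ)⁻¹ • ∑ σ, ∑ τ, contractionTerm hrp hrq x y σ τ) :=
        rfl
    _ = _ := by rw [sum_sum_contractionTerm, smul_smul, smul_smul, hcoef, one_smul]; rfl
end

section
/- Let n ≥ 1 and let f, g : [0,1]^n → ℝ. For intervals [t_i^1, t_i^2] ⊂ [0,1], the rectangular increment of the pointwise product satisfies (fg)(∏_{i=1}^n [t_i^1,t_i^2]) = ∑_{A ⊆ {1,...,n}} f(t_a^2, [t_r^1,t_r^2] ; a ∈ A, r ∈ A^c) · g(t_r^1, [t_a^1,t_a^2] ; r ∈ A^c, a ∈ A), where the sum is over all subsets A of {1,...,n}, and the notation means: in f, the coordinates in A are evaluated at the right endpoints t_a^2 while the coordinates in A^c are incremented over [t_r^1,t_r^2]; in g, coordinates in A^c are evaluated at the left endpoints t_r^1 while coordinates in A are incremented. -/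
/-!
Expanding both increments over the vertices `v_B = (t₂ on B, t₁ off B)` of the box, the
right-hand side becomes `∑_{S ⊆ A ⊆ B} ± f(v_B) g(v_S)`. For fixed `S ⊆ B` the alternating sum
over the intermediate `A` vanishes unless `S = B` (Möbius inversion on the Boolean lattice),
which leaves `∑_B ± f(v_B) g(v_B)`, the left-hand side.
-/

open Finset

/-- Mixed rectangular increment of an `n`-variable function `h`: the
coordinates in `A` are fixed at the value `fix`, while the function is given
the rectangular increment between `a` and `b` in the coordinates of `Aᶜ`:
`∑_{S ⊆ Aᶜ} (-1)^{|Aᶜ| - |S|} h(fix on A, b on S, a on Aᶜ \ S)`. -/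
def mixedIncr {n : ℕ} (h : (Fin n → ℝ) → ℝ) (A : Finset (Fin n))
    (fix a b : Fin n → ℝ) : ℝ :=
  ∑ S ∈ Aᶜ.powerset,
    (-1 : ℝ) ^ (Aᶜ.card - S.card) *
      h (fun i => if i ∈ A then fix i else if i ∈ S then b i else a i)

namespace Finset

variable {ι R : Type*} [DecidableEq ι]

theorem sum_Icc_eq_sum_powerset_sdiff [AddCommMonoid R] {s t : Finset ι} (hst : s ⊆ t)
    (F : Finset ι → R) : ∑ u ∈ Icc s t, F u = ∑ v ∈ (t \ s).powerset, F (s ∪ v) := by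
  have hdisj {v : Finset ι} (hv : v ∈ (t \ s).powerset) : Disjoint s v :=
    disjoint_sdiff.mono_right (mem_powerset.1 hv)
  refine (Icc_eq_image_powerset hst).symm ▸ sum_image fun v hv w hw hvw => ?_
  rw [← union_sdiff_cancel_left (hdisj hv), ← union_sdiff_cancel_left (hdisj hw)]
  exact congrArg (· \ s) hvw

variable [Ring R]

theorem sum_Icc_neg_one_pow_card_sdiff {s t : Finset ι} (hst : s ⊆ t) :
    ∑ u ∈ Icc s t, (-1 : R) ^ #(u \ s) = if s = t then 1 else 0 := by
  have hsum := congrArg (Int.cast : ℤ → R) (sum_powerset_neg_one_pow_card (x := t \ s))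
  push_cast at hsum
  rw [sum_Icc_eq_sum_powerset_sdiff hst, sum_congr rfl fun v hv => by
    rw [union_sdiff_cancel_left (disjoint_sdiff.mono_right (mem_powerset.1 hv))], hsum]
  exact if_congr (sdiff_eq_empty_iff_subset.trans ⟨hst.antisymm, fun h => h.ge⟩) rfl rfl

/-- Möbius inversion on the lattice of subsets of `t`. -/
theorem sum_powerset_sum_powerset_neg_one_pow_mul (ψ : Finset ι → R) (t : Finset ι) :
    ∑ u ∈ t.powerset, ∑ s ∈ u.powerset, (-1 : R) ^ #(u \ s) * ψ s = ψ t := by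
  have hswap : ∀ u s, u ∈ t.powerset ∧ s ∈ u.powerset ↔ u ∈ Icc s t ∧ s ∈ t.powerset := by
    simp only [mem_powerset, mem_Icc]
    exact fun u s =>
      ⟨fun ⟨hut, hsu⟩ => ⟨⟨hsu, hut⟩, hsu.trans hut⟩, fun ⟨⟨hsu, hut⟩, _⟩ => ⟨hut, hsu⟩⟩
  rw [sum_comm' hswap]
  simp_rw [← sum_mul]
  rw [sum_eq_single_of_mem t (mem_powerset_self t)]
  · rw [sum_Icc_neg_one_pow_card_sdiff subset_rfl, if_pos rfl, one_mul]
  · intro s hs hst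
    rw [sum_Icc_neg_one_pow_card_sdiff (mem_powerset.1 hs), if_neg hst, zero_mul]

theorem sum_mul_eq_sum_sum_superset_mul_sum_powerset [Fintype ι] (φ ψ : Finset ι → R) :
    ∑ t, φ t * ψ t =
      ∑ u, (∑ t with u ⊆ t, φ t) * ∑ s ∈ u.powerset, (-1 : R) ^ #(u \ s) * ψ s := by
  have hswap : ∀ u t : Finset ι, u ∈ univ ∧ t ∈ ({t | u ⊆ t} : Finset _) ↔
      u ∈ t.powerset ∧ t ∈ univ := by
    simp
  simp_rw [sum_mul, sum_comm' hswap, ← mul_sum, sum_powerset_sum_powerset_neg_one_pow_mul]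

end Finset

section mixedIncr

variable {n : ℕ}

theorem mixedIncr_eq_sum_powerset (h : (Fin n → ℝ) → ℝ) (A : Finset (Fin n))
    (fix a b : Fin n → ℝ) :
    mixedIncr h A fix a b =
      ∑ S ∈ Aᶜ.powerset, (-1 : ℝ) ^ #(Aᶜ \ S) * h (A.piecewise fix (S.piecewise b a)) :=
  sum_congr rfl fun S hS => by rw [card_sdiff_of_subset (mem_powerset.1 hS)]; rfl

theorem mixedIncr_eq_sum_superset (h : (Fin n → ℝ) → ℝ) (A : Finset (Fin n)) (a b : Fin n → ℝ) :
    mixedIncr h A b a b = ∑ B with A ⊆ B, (-1 : ℝ) ^ #Bᶜ * h (B.piecewise b a) := by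
  have hIcc : ({B | A ⊆ B} : Finset (Finset (Fin n))) = Icc A univ := by
    ext; simp
  rw [mixedIncr_eq_sum_powerset, hIcc, sum_Icc_eq_sum_powerset_sdiff (subset_univ A),
    ← compl_eq_univ_sdiff]
  refine sum_congr rfl fun S _ => ?_
  rw [compl_union, ← sdiff_eq_inter_compl]
  congr 2
  ext i
  by_cases hA : i ∈ A <;> by_cases hS : i ∈ S <;> simp [hA, hS]

theorem mixedIncr_compl_eq_sum_powerset (h : (Fin n → ℝ) → ℝ) (A : Finset (Fin n)) (a b : Fin n → ℝ) :
    mixedIncr h Aᶜ a a b = ∑ S ∈ A.powerset, (-1 : ℝ) ^ #(A \ S) * h (S.piecewise b a) := by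
  rw [mixedIncr_eq_sum_powerset, compl_compl]
  refine sum_congr rfl fun S hS => ?_
  congr 2
  ext i
  by_cases hiS : i ∈ S
  · simp [hiS, mem_powerset.1 hS hiS]
  · by_cases hiA : i ∈ A <;> simp [hiA, hiS]

end mixedIncr

theorem rectIncr_mul_general (n : ℕ) (f g : (Fin n → ℝ) → ℝ)
    (t₁ t₂ : Fin n → ℝ) :
    mixedIncr (fun u => f u * g u) (∅ : Finset (Fin n)) t₁ t₁ t₂ =
      ∑ A : Finset (Fin n),
        mixedIncr f A t₂ t₁ t₂ * mixedIncr g Aᶜ t₁ t₁ t₂ := by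
  rw [← compl_univ, mixedIncr_compl_eq_sum_powerset, powerset_univ]
  simp_rw [mixedIncr_eq_sum_superset, mixedIncr_compl_eq_sum_powerset, ← compl_eq_univ_sdiff, ← mul_assoc]
  exact sum_mul_eq_sum_sum_superset_mul_sum_powerset _ _

/-- Leibniz-type formula for the rectangular increment of a product:
`(fg)(∏[t¹ᵢ,t²ᵢ]) = ∑_{A ⊆ {1,…,n}} f(t² on A, incremented on Aᶜ) ·
g(t¹ on Aᶜ, incremented on A)`. -/
theorem rectIncr_mul (n : ℕ) (hn : 1 ≤ n) (f g : (Fin n → ℝ) → ℝ)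
    (t₁ t₂ : Fin n → ℝ) :
    mixedIncr (fun u => f u * g u) (∅ : Finset (Fin n)) t₁ t₁ t₂ =
      ∑ A : Finset (Fin n),
        mixedIncr f A t₂ t₁ t₂ * mixedIncr g Aᶜ t₁ t₁ t₂ :=
  rectIncr_mul_general n f g t₁ t₂
end
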